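/- arXiv:0802.2874 — 2 statements merged into one kernel-verified Lean document; each statement's English description precedes it below -/
import Mathlib

section
/- Let H∞, H1, H0 be finite-dimensional Z/2Z-vector spaces with linear maps φ, φ̄ : H∞ → H1 and ψ, ψ̄ : H1 → H0 satisfying ψ̄ ∘ φ = 0 and ψ ∘ φ̄ = 0. For two such systems (superscripts 1 and 2), the cube complex M with underlying space the direct sum of H^1_∞⊗H^2_∞, H^1_∞⊗H^2_1, H^1_1⊗H^2_∞, two copies of H^1_1⊗H^2_1, H^1_1⊗H^2_0, H^1_0⊗H^2_1, H^1_0⊗H^2_0, and differential given by the sum of the maps φ^1⊗I, I⊗φ^2, ψ^1⊗I, I⊗ψ^2, φ̄^1⊗ψ̄^2, ψ̄^1⊗φ̄^2, (ψ̄^1φ̄^1)⊗(ψ̄^2φ̄^2), and the identity between the two copies of H^1_1⊗H^2_1 (as arranged in the splicing cube), satisfies d_M ∘ d_M = 0, so (M, d_M) is a chain complex. -/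
open TensorProduct

/-- The splicing cube is a complex.  For `i = 1, 2` we are given
`ℤ/2ℤ`-vector spaces `H^i_∞, H^i_1, H^i_0` (here `Ai, A1, A0` for `i = 1`
and `Bi, B1, B0` for `i = 2`) and linear maps `φ, φbar : H_∞ → H_1`
(here `p, pbar` resp. `r, rbar`) and `ψ, ψbar : H_1 → H_0` (here `q, qbar`
resp. `s, sbar`) with `ψbar ∘ φ = 0` and `ψ ∘ φbar = 0`.  The cube complex
has underlying space the direct sum of `H^1_∞⊗H^2_∞`, `H^1_∞⊗H^2_1`,
`H^1_1⊗H^2_∞`, two copies of `H^1_1⊗H^2_1`, `H^1_1⊗H^2_0`, `H^1_0⊗H^2_1`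
and `H^1_0⊗H^2_0`, and its differential is the sum of the edge maps
`φ¹⊗I`, `I⊗φ²`, `ψ¹⊗I`, `I⊗ψ²`, `φbar¹⊗ψbar²`, `ψbar¹⊗φbar²`, the long
diagonal `(ψbar¹φbar¹)⊗(ψbar²φbar²)`, and the identity between the two
copies of `H^1_1⊗H^2_1`.  Then `d ∘ d = 0`. -/
theorem stmt10 (Ai A1 A0 Bi B1 B0 : Type)
    [AddCommGroup Ai] [Module (ZMod 2) Ai] [AddCommGroup A1] [Module (ZMod 2) A1]
    [AddCommGroup A0] [Module (ZMod 2) A0] [AddCommGroup Bi] [Module (ZMod 2) Bi]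
    [AddCommGroup B1] [Module (ZMod 2) B1] [AddCommGroup B0] [Module (ZMod 2) B0]
    (p pbar : Ai →ₗ[ZMod 2] A1) (q qbar : A1 →ₗ[ZMod 2] A0)
    (r rbar : Bi →ₗ[ZMod 2] B1) (s sbar : B1 →ₗ[ZMod 2] B0)
    (h1 : qbar ∘ₗ p = 0) (h2 : q ∘ₗ pbar = 0)
    (h3 : sbar ∘ₗ r = 0) (h4 : s ∘ₗ rbar = 0)
    (d : ((Ai ⊗[ZMod 2] Bi) × (Ai ⊗[ZMod 2] B1) × (A1 ⊗[ZMod 2] Bi) ×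
          (A1 ⊗[ZMod 2] B1) × (A1 ⊗[ZMod 2] B1) × (A1 ⊗[ZMod 2] B0) ×
          (A0 ⊗[ZMod 2] B1) × (A0 ⊗[ZMod 2] B0)) →ₗ[ZMod 2]
         ((Ai ⊗[ZMod 2] Bi) × (Ai ⊗[ZMod 2] B1) × (A1 ⊗[ZMod 2] Bi) ×
          (A1 ⊗[ZMod 2] B1) × (A1 ⊗[ZMod 2] B1) × (A1 ⊗[ZMod 2] B0) ×
          (A0 ⊗[ZMod 2] B1) × (A0 ⊗[ZMod 2] B0)))
    -- components of x: (a, b, c, e, e', f, g, h): a = H∞∞, b = H∞1, c = H1∞,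
    -- e = H11 (top copy), e' = H11 (bottom copy), f = H10, g = H01, h = H00
    (hd : ∀ x, d x =
      (0,
       TensorProduct.map LinearMap.id r x.1,
       TensorProduct.map p LinearMap.id x.1,
       TensorProduct.map p LinearMap.id x.2.1
         + TensorProduct.map LinearMap.id r x.2.2.1 + x.2.2.2.2.1,
       0,
       TensorProduct.map pbar sbar x.2.1
         + TensorProduct.map LinearMap.id s x.2.2.2.2.1,
       TensorProduct.map qbar rbar x.2.2.1
         + TensorProduct.map q LinearMap.id x.2.2.2.2.1,
       TensorProduct.map (qbar ∘ₗ pbar) (sbar ∘ₗ rbar) x.1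
         + TensorProduct.map q LinearMap.id x.2.2.2.2.2.1
         + TensorProduct.map LinearMap.id s x.2.2.2.2.2.2.1)) :
    d ∘ₗ d = 0 := by
  have twoz : ∀ {M : Type} [inst : AddCommGroup M] [inst2 : Module (ZMod 2) M] (x : M),
      x + x = 0 := by
    intro M _ _ x
    have h : ((1 : ZMod 2) + 1) = 0 := by decide
    calc x + x = ((1 : ZMod 2) + 1) • x := by rw [add_smul, one_smul]
    _ = 0 := by rw [h, zero_smul]
  apply LinearMap.ext; intro x
  simp only [LinearMap.comp_apply, LinearMap.zero_apply, hd]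
  refine Prod.ext rfl (Prod.ext ?_ (Prod.ext ?_ (Prod.ext ?_ (Prod.ext rfl
    (Prod.ext ?_ (Prod.ext ?_ ?_))))))
  · simp
  · simp
  · simp only [← LinearMap.comp_apply, ← TensorProduct.map_comp]
    simp [twoz]
  · simp only [map_add, ← LinearMap.comp_apply, ← TensorProduct.map_comp, h3]
    simp
  · simp only [map_add, ← LinearMap.comp_apply, ← TensorProduct.map_comp, h1]
    simp
  · simp only [map_add, map_zero, ← LinearMap.comp_apply, ← TensorProduct.map_comp, h2, h4]
    simp only [TensorProduct.map_zero_left, TensorProduct.map_zero_right]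
    abel_nf
    simp [twoz]
end

section
/- Let f : C → D and g : D → E be chain maps over Z/2Z with g ∘ f = 0, and suppose Im(f*) = Ker(g*) in H(D) and the map θ : ker(f*) → coker(g*) is zero. Then the homology of the total complex of C → D → E has dimension dim ker(f*) + dim coker(g*). -/
open LinearMap

private lemma char2_add_self {M : Type} [AddCommGroup M] [Module (ZMod 2) M] (x : M) :
    x + x = 0 := by
  have h : (2 : ZMod 2) • x = x + x := two_smul _ x
  rw [show (2 : ZMod 2) = 0 by decide, zero_smul] at h
  exact h.symm

private lemma char2_eq_of_add_eq_zero {M : Type} [AddCommGroup M] [Module (ZMod 2) M]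
    {x y : M} (h : x + y = 0) : x = y := by
  rw [← add_zero x, ← char2_add_self y, ← add_assoc, h, zero_add]

private lemma quot_rank {M : Type} [AddCommGroup M] [Module (ZMod 2) M]
    [FiniteDimensional (ZMod 2) M] (dM : M →ₗ[ZMod 2] M)
    (hle : LinearMap.range dM ≤ LinearMap.ker dM) :
    Module.finrank (ZMod 2)
        (LinearMap.ker dM ⧸ (LinearMap.range dM).comap (LinearMap.ker dM).subtype)
      + Module.finrank (ZMod 2) (LinearMap.range dM)
      = Module.finrank (ZMod 2) (LinearMap.ker dM) := by
  have h := Submodule.finrank_quotient_add_finrank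
    ((LinearMap.range dM).comap (LinearMap.ker dM).subtype)
  rwa [(Submodule.comapSubtypeEquivOfLe hle).finrank_eq] at h

private lemma key_aux {M : Type} [AddCommGroup M] [Module (ZMod 2) M]
    [FiniteDimensional (ZMod 2) M]
    (dM : M →ₗ[ZMod 2] M) (K : Submodule (ZMod 2) M)
    (hK : K ≤ LinearMap.ker dM) (hBK : LinearMap.range dM ≤ K)
    (S : Submodule (ZMod 2)
      ((LinearMap.ker dM) ⧸ (LinearMap.range dM).comap (LinearMap.ker dM).subtype))
    (hS : ∀ x : LinearMap.ker dM, Submodule.Quotient.mk x ∈ S ↔ x.1 ∈ K) :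
    Module.finrank (ZMod 2) K =
      Module.finrank (ZMod 2) (LinearMap.range dM) + Module.finrank (ZMod 2) S := by
  let φ : K →ₗ[ZMod 2]
      (LinearMap.ker dM ⧸ (LinearMap.range dM).comap (LinearMap.ker dM).subtype) :=
    ((LinearMap.range dM).comap (LinearMap.ker dM).subtype).mkQ ∘ₗ Submodule.inclusion hK
  have hφ : ∀ x : K, φ x = Submodule.Quotient.mk (Submodule.inclusion hK x) := fun _ => rfl
  have hrange : LinearMap.range φ = S := by
    ext s
    constructor
    · rintro ⟨x, rfl⟩
      rw [hφ, hS]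
      exact x.2
    · intro hs
      obtain ⟨y, rfl⟩ := Submodule.Quotient.mk_surjective _ s
      exact ⟨⟨y.1, (hS y).mp hs⟩, rfl⟩
  have hker : Module.finrank (ZMod 2) (LinearMap.ker φ)
      = Module.finrank (ZMod 2) (LinearMap.range dM) := by
    let r : M →ₗ[ZMod 2] K := LinearMap.codRestrict K dM (fun m => hBK ⟨m, rfl⟩)
    have h1 : LinearMap.range r = LinearMap.ker φ := by
      ext x
      constructor
      · rintro ⟨m, rfl⟩
        have : φ (r m) = 0 := by
          rw [hφ, Submodule.Quotient.mk_eq_zero]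
          exact ⟨m, rfl⟩
        exact this
      · intro hx
        have hx' : Submodule.Quotient.mk (Submodule.inclusion hK x) = (0 : _ ⧸ (LinearMap.range dM).comap (LinearMap.ker dM).subtype) := hx
        rw [Submodule.Quotient.mk_eq_zero] at hx'
        obtain ⟨m, hm⟩ := hx'
        exact ⟨m, Subtype.ext hm⟩
    have h2 : LinearMap.ker r = LinearMap.ker dM := LinearMap.ker_codRestrict _ _ _
    have e1 := LinearMap.finrank_range_add_finrank_ker r
    have e2 := LinearMap.finrank_range_add_finrank_ker dM
    rw [h1, h2] at e1
    omega
  have e3 := LinearMap.finrank_range_add_finrank_ker φ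
  rw [hrange, hker] at e3
  omega


set_option maxHeartbeats 1000000 in
/-- Dimension of the homology of the total complex.  Let `f : C → D` and
`g : D → E` be chain maps of chain complexes of finite-dimensional
`ℤ/2ℤ`-vector spaces with `g ∘ f = 0`, such that the induced sequence on
homology is exact at `H(D)` (`im f₊ = ker g₊`) and the secondary map
`θ : ker f₊ → coker g₊` vanishes.  Then the homology of the total complex
`C ⊕ D ⊕ E` (with differential `(c,d,e) ↦ (dC c, f c + dD d, g d + dE e)`)
has dimension `dim ker f₊ + dim coker g₊`. -/
theorem stmt14 (C D E : Type) [AddCommGroup C] [Module (ZMod 2) C]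
    [AddCommGroup D] [Module (ZMod 2) D] [AddCommGroup E] [Module (ZMod 2) E]
    [FiniteDimensional (ZMod 2) C] [FiniteDimensional (ZMod 2) D]
    [FiniteDimensional (ZMod 2) E]
    (dC : C →ₗ[ZMod 2] C) (dD : D →ₗ[ZMod 2] D) (dE : E →ₗ[ZMod 2] E)
    (hdC : dC ∘ₗ dC = 0) (hdD : dD ∘ₗ dD = 0) (hdE : dE ∘ₗ dE = 0)
    (f : C →ₗ[ZMod 2] D) (g : D →ₗ[ZMod 2] E)
    (hf : dD ∘ₗ f = f ∘ₗ dC) (hg : dE ∘ₗ g = g ∘ₗ dD) (hgf : g ∘ₗ f = 0)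
    -- the induced maps on homology
    (fstar : (ker dC ⧸ (range dC).comap (ker dC).subtype) →ₗ[ZMod 2]
             (ker dD ⧸ (range dD).comap (ker dD).subtype))
    (gstar : (ker dD ⧸ (range dD).comap (ker dD).subtype) →ₗ[ZMod 2]
             (ker dE ⧸ (range dE).comap (ker dE).subtype))
    (hfstar : ∀ x : ker dC, fstar (Submodule.Quotient.mk x) =
      Submodule.Quotient.mk ⟨f x.1, mem_ker.mpr (by
        rw [show dD (f x.1) = f (dC x.1) from LinearMap.congr_fun hf x.1,
          mem_ker.mp x.2, map_zero])⟩)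
    (hgstar : ∀ y : ker dD, gstar (Submodule.Quotient.mk y) =
      Submodule.Quotient.mk ⟨g y.1, mem_ker.mpr (by
        rw [show dE (g y.1) = g (dD y.1) from LinearMap.congr_fun hg y.1,
          mem_ker.mp y.2, map_zero])⟩)
    -- (i) exactness of the induced sequence on homology
    (hexact : range fstar = ker gstar)
    -- (ii) vanishing of the secondary map θ : ker f₊ → coker g₊
    (htheta : ∀ (a : C) (b : D), dC a = 0 → f a = dD b →
      ∃ (z : D) (w : E), dD z = 0 ∧ g b = g z + dE w)
    -- the total complex of C → D → E
    (dT : (C × D × E) →ₗ[ZMod 2] (C × D × E))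
    (hdT : ∀ x, dT x = (dC x.1, f x.1 + dD x.2.1, g x.2.1 + dE x.2.2)) :
    Module.finrank (ZMod 2) (ker dT ⧸ (range dT).comap (ker dT).subtype)
      = Module.finrank (ZMod 2) (ker fstar)
        + Module.finrank (ZMod 2)
            ((ker dE ⧸ (range dE).comap (ker dE).subtype) ⧸ range gstar) := by

  classical
  have hfc : ∀ c, dD (f c) = f (dC c) := fun c => LinearMap.congr_fun hf c
  have hgc : ∀ d, dE (g d) = g (dD d) := fun d => LinearMap.congr_fun hg d
  have hgfc : ∀ c, g (f c) = 0 := fun c => LinearMap.congr_fun hgf c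
  have hdCc : ∀ c, dC (dC c) = 0 := fun c => LinearMap.congr_fun hdC c
  have hdDc : ∀ d, dD (dD d) = 0 := fun d => LinearMap.congr_fun hdD d
  have hdEc : ∀ e, dE (dE e) = 0 := fun e => LinearMap.congr_fun hdE e
  -- membership in ker dT, componentwise
  have memker : ∀ x : C × D × E, x ∈ LinearMap.ker dT ↔
      dC x.1 = 0 ∧ f x.1 + dD x.2.1 = 0 ∧ g x.2.1 + dE x.2.2 = 0 := by
    intro x
    rw [LinearMap.mem_ker, hdT x]
    constructor
    · intro h
      exact ⟨congrArg Prod.fst h, congrArg (fun y => y.2.1) h, congrArg (fun y => y.2.2) h⟩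
    · rintro ⟨h1, h2, h3⟩
      rw [h1, h2, h3]; rfl
  -- the complexes square to zero
  have hrleC : LinearMap.range dC ≤ LinearMap.ker dC := by
    rintro _ ⟨c, rfl⟩; exact LinearMap.mem_ker.mpr (hdCc c)
  have hrleD : LinearMap.range dD ≤ LinearMap.ker dD := by
    rintro _ ⟨d, rfl⟩; exact LinearMap.mem_ker.mpr (hdDc d)
  have hrleE : LinearMap.range dE ≤ LinearMap.ker dE := by
    rintro _ ⟨e, rfl⟩; exact LinearMap.mem_ker.mpr (hdEc e)
  have hrleT : LinearMap.range dT ≤ LinearMap.ker dT := by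
    rintro _ ⟨x, rfl⟩
    rw [memker, hdT x]
    refine ⟨hdCc _, ?_, ?_⟩
    · rw [map_add, hfc, hdDc, add_zero, char2_add_self]
    · rw [map_add, map_add, hgfc, zero_add, hgc, hdEc, add_zero, char2_add_self]
  -- the two key submodules
  have hK1 : Module.finrank (ZMod 2) (LinearMap.ker dC ⊓ (LinearMap.range dD).comap f :
        Submodule (ZMod 2) C)
      = Module.finrank (ZMod 2) (LinearMap.range dC)
        + Module.finrank (ZMod 2) (LinearMap.ker fstar) := by
    apply key_aux dC _ inf_le_left
    · rintro _ ⟨c, rfl⟩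
      exact ⟨LinearMap.mem_ker.mpr (hdCc c), ⟨f c, hfc c⟩⟩
    · intro x
      rw [LinearMap.mem_ker, hfstar x, Submodule.Quotient.mk_eq_zero, Submodule.mem_inf]
      constructor
      · intro h
        exact ⟨x.2, h⟩
      · rintro ⟨-, h⟩
        exact h
  have hK2 : Module.finrank (ZMod 2) (LinearMap.ker dD ⊓ (LinearMap.range dE).comap g :
        Submodule (ZMod 2) D)
      = Module.finrank (ZMod 2) (LinearMap.range dD)
        + Module.finrank (ZMod 2) (LinearMap.ker gstar) := by
    apply key_aux dD _ inf_le_left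
    · rintro _ ⟨d, rfl⟩
      exact ⟨LinearMap.mem_ker.mpr (hdDc d), ⟨g d, hgc d⟩⟩
    · intro x
      rw [LinearMap.mem_ker, hgstar x, Submodule.Quotient.mk_eq_zero, Submodule.mem_inf]
      constructor
      · intro h
        exact ⟨x.2, h⟩
      · rintro ⟨-, h⟩
        exact h
  -- first projection from ker dT
  let p : (LinearMap.ker dT) →ₗ[ZMod 2] C :=
    (LinearMap.fst (ZMod 2) C (D × E)) ∘ₗ (LinearMap.ker dT).subtype
  have hp : ∀ x : LinearMap.ker dT, p x = x.1.1 := fun _ => rfl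
  have hrp : LinearMap.range p = LinearMap.ker dC ⊓ (LinearMap.range dD).comap f := by
    ext c
    constructor
    · rintro ⟨y, rfl⟩
      rw [hp y]
      obtain ⟨h1, h2, h3⟩ := (memker y.1).mp y.2
      exact ⟨LinearMap.mem_ker.mpr h1, ⟨y.1.2.1, (char2_eq_of_add_eq_zero h2).symm⟩⟩
    · rintro ⟨hc1, b, hb⟩
      obtain ⟨z, w, hz, hw⟩ := htheta c b (LinearMap.mem_ker.mp hc1) hb.symm
      have hmem : ((c, b + z, w) : C × D × E) ∈ LinearMap.ker dT := by
        rw [memker]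
        refine ⟨LinearMap.mem_ker.mp hc1, ?_, ?_⟩
        · show f c + dD (b + z) = 0
          rw [map_add, ← hb, ← add_assoc, char2_add_self, zero_add, hz]
        · show g (b + z) + dE w = 0
          rw [map_add, hw]
          have : ((g z + dE w) + g z) + dE w = (g z + g z) + (dE w + dE w) := by abel
          rw [this, char2_add_self, char2_add_self, add_zero]
      exact ⟨⟨_, hmem⟩, by rw [hp]⟩
  -- second projection
  let p2 : (LinearMap.ker p) →ₗ[ZMod 2] D :=
    (LinearMap.fst (ZMod 2) D E) ∘ₗ (LinearMap.snd (ZMod 2) C (D × E)) ∘ₗ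
      (LinearMap.ker dT).subtype ∘ₗ (LinearMap.ker p).subtype
  have hp2 : ∀ x : LinearMap.ker p, p2 x = x.1.1.2.1 := fun _ => rfl
  have hrp2 : LinearMap.range p2 = LinearMap.ker dD ⊓ (LinearMap.range dE).comap g := by
    ext d
    constructor
    · rintro ⟨y, rfl⟩
      rw [hp2 y]
      have hx1 : y.1.1.1 = 0 := by
        rw [← hp y.1]; exact LinearMap.mem_ker.mp y.2
      obtain ⟨h1, h2, h3⟩ := (memker y.1.1).mp y.1.2
      rw [hx1, map_zero, zero_add] at h2
      exact ⟨LinearMap.mem_ker.mpr h2, ⟨y.1.1.2.2, (char2_eq_of_add_eq_zero h3).symm⟩⟩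
    · rintro ⟨hd1, e, he⟩
      have hmem : ((0, d, e) : C × D × E) ∈ LinearMap.ker dT := by
        rw [memker]
        refine ⟨map_zero _, ?_, ?_⟩
        · show f 0 + dD d = 0
          rw [map_zero, zero_add]
          exact LinearMap.mem_ker.mp hd1
        · show g d + dE e = 0
          rw [he, char2_add_self]
      have hmem2 : (⟨(0, d, e), hmem⟩ : LinearMap.ker dT) ∈ LinearMap.ker p :=
        LinearMap.mem_ker.mpr (by rw [hp])
      exact ⟨⟨_, hmem2⟩, by rw [hp2]⟩
  -- third projection
  let p3 : (LinearMap.ker p2) →ₗ[ZMod 2] E :=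
    (LinearMap.snd (ZMod 2) D E) ∘ₗ (LinearMap.snd (ZMod 2) C (D × E)) ∘ₗ
      (LinearMap.ker dT).subtype ∘ₗ (LinearMap.ker p).subtype ∘ₗ (LinearMap.ker p2).subtype
  have hp3 : ∀ x : LinearMap.ker p2, p3 x = x.1.1.1.2.2 := fun _ => rfl
  have hrp3 : LinearMap.range p3 = LinearMap.ker dE := by
    ext e
    constructor
    · rintro ⟨y, rfl⟩
      rw [hp3 y]
      have hx2 : y.1.1.1.2.1 = 0 := by
        rw [← hp2 y.1]; exact LinearMap.mem_ker.mp y.2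
      obtain ⟨h1, h2, h3⟩ := (memker y.1.1.1).mp y.1.1.2
      rw [hx2, map_zero, zero_add] at h3
      exact LinearMap.mem_ker.mpr h3
    · intro he
      have hmem : ((0, 0, e) : C × D × E) ∈ LinearMap.ker dT := by
        rw [memker]
        refine ⟨map_zero _, ?_, ?_⟩
        · show f 0 + dD 0 = 0
          rw [map_zero, map_zero, zero_add]
        · show g 0 + dE e = 0
          rw [map_zero, zero_add]
          exact LinearMap.mem_ker.mp he
      have hmem2 : (⟨(0, 0, e), hmem⟩ : LinearMap.ker dT) ∈ LinearMap.ker p :=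
        LinearMap.mem_ker.mpr (by rw [hp])
      have hmem3 : (⟨⟨(0, 0, e), hmem⟩, hmem2⟩ : LinearMap.ker p) ∈ LinearMap.ker p2 :=
        LinearMap.mem_ker.mpr (by rw [hp2])
      exact ⟨⟨_, hmem3⟩, by rw [hp3]⟩
  have hkp3 : LinearMap.ker p3 = ⊥ := by
    rw [LinearMap.ker_eq_bot']
    intro x hx
    have hx1 : x.1.1.1.1 = 0 := by
      rw [← hp x.1.1]; exact LinearMap.mem_ker.mp x.1.2
    have hx2 : x.1.1.1.2.1 = 0 := by
      rw [← hp2 x.1]; exact LinearMap.mem_ker.mp x.2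
    have hx3 : x.1.1.1.2.2 = 0 := by
      rw [← hp3 x]; exact hx
    have h4 : x.1.1.1 = (0 : C × D × E) := Prod.ext hx1 (Prod.ext hx2 hx3)
    exact Subtype.ext (Subtype.ext (Subtype.ext h4))
  -- dimension bookkeeping
  have e1 := LinearMap.finrank_range_add_finrank_ker p
  have e2 := LinearMap.finrank_range_add_finrank_ker p2
  have e3 := LinearMap.finrank_range_add_finrank_ker p3
  rw [hrp] at e1
  rw [hrp2] at e2
  rw [hrp3, hkp3, finrank_bot, add_zero] at e3
  have qT := quot_rank dT hrleT
  have qC := quot_rank dC hrleC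
  have qD := quot_rank dD hrleD
  have qE := quot_rank dE hrleE
  have rnT := LinearMap.finrank_range_add_finrank_ker dT
  rw [Module.finrank_prod, Module.finrank_prod] at rnT
  have rnC := LinearMap.finrank_range_add_finrank_ker dC
  have rnD := LinearMap.finrank_range_add_finrank_ker dD
  have rnE := LinearMap.finrank_range_add_finrank_ker dE
  have rnf := LinearMap.finrank_range_add_finrank_ker fstar
  have rng := LinearMap.finrank_range_add_finrank_ker gstar
  have hex : Module.finrank (ZMod 2) (LinearMap.ker gstar)
      = Module.finrank (ZMod 2) (LinearMap.range fstar) := by rw [hexact]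
  have qcoker := Submodule.finrank_quotient_add_finrank (LinearMap.range gstar)
  omega
end
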